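/- Let n ≥ 3 and let f_0, …, f_n be complex numbers such that the 2 × n matrix A with entries A_{i,j} = f_{i+j} (for 0 ≤ i ≤ 1 and 0 ≤ j ≤ n−1) has rank 2. Then the 3 × (n−1) matrix B with entries B_{i,j} = f_{i+j} (for 0 ≤ i ≤ 2 and 0 ≤ j ≤ n−2) has rank at least 2. -/

import Mathlib

/-!
A matrix has rank at most one exactly when all its `2 × 2` minors vanish. If `B` had rank at
most one, its minors in rows `0, 1` and in rows `1, 2` would be all minors of `A` except the one
in columns `0` and `n - 1`; the square of that one is a combination of three minors of `B`, so
it vanishes as well and `A` would have rank at most one.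
-/

namespace Matrix

variable {m n K : Type*} [Fintype n] [Field K] {M : Matrix m n K}

theorem two_le_rank_of_mul_ne_mul {i i' : m} {j j' : n}
    (h : M i j * M i' j' ≠ M i j' * M i' j) : 2 ≤ M.rank := by
  have hdet : (M.submatrix ![i, i'] ![j, j']).det ≠ 0 := by
    rw [det_fin_two]
    simpa [sub_eq_zero] using h
  have hsub := M.rank_submatrix_le ![i, i'] ![j, j']
  rwa [rank_of_det_ne_zero hdet, Fintype.card_fin] at hsub

theorem rank_le_one_of_mul_eq_mul (h : ∀ i i' j j', M i j * M i' j' = M i j' * M i' j) :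
    M.rank ≤ 1 := by
  by_cases hM : M = 0
  · simp [hM]
  obtain ⟨i₀, j₀, hne⟩ : ∃ i j, M i j ≠ 0 := by
    by_contra! hzero
    exact hM (ext hzero)
  have hM : M = vecMulVec (fun i => M i j₀) (fun j => M i₀ j / M i₀ j₀) := by
    ext i j
    rw [vecMulVec_apply, mul_div_assoc', eq_div_iff hne]
    exact h i i₀ j j₀
  rw [hM]
  exact rank_vecMulVec_le _ _

theorem rank_le_one_iff : M.rank ≤ 1 ↔ ∀ i i' j j', M i j * M i' j' = M i j' * M i' j :=
  ⟨fun h i i' j j' => by_contra fun hne => by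
    have := two_le_rank_of_mul_ne_mul hne; omega,
   rank_le_one_of_mul_eq_mul⟩

end Matrix

variable {K : Type*} [Field K]

theorem hankel_two_row_minor_eq (f : ℕ → K) {n : ℕ} (hn : 3 ≤ n)
    (hminors : ∀ i i' j j', i ≤ 2 → i' ≤ 2 → j ≤ n - 2 → j' ≤ n - 2 →
      f (i + j) * f (i' + j') = f (i + j') * f (i' + j))
    {j j' : ℕ} (hj : j < n) (hj' : j' < n) : f j * f (j' + 1) = f j' * f (j + 1) := by
  wlog hle : j ≤ j' generalizing j j'
  · exact (this hj' hj (by omega)).symm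
  by_cases hj'n : j' ≤ n - 2
  · simpa only [zero_add, add_comm 1] using
      hminors 0 1 j j' (by omega) (by omega) (by omega) hj'n
  obtain ⟨k, rfl⟩ | rfl : (∃ k, j = k + 1) ∨ j = 0 := by
    rcases j with _ | k
    · exact .inr rfl
    · exact .inl ⟨k, rfl⟩
  · obtain ⟨k', rfl⟩ : ∃ k', j' = k' + 1 := ⟨j' - 1, by omega⟩
    simpa only [add_comm 1, add_comm 2, add_assoc, one_add_one_eq_two] using
      hminors 1 2 k k' (by omega) (by omega) (by omega) (by omega)
  · obtain ⟨m, rfl⟩ : ∃ m, n = m + 3 := ⟨n - 3, by omega⟩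
    obtain rfl : j' = m + 2 := by omega
    have h₁ := hminors 0 1 0 1 (by omega) (by omega) (by omega) (by omega)
    have h₂ := hminors 1 2 0 (m + 1) (by omega) (by omega) (by omega) (by omega)
    have h₃ := hminors 0 2 0 (m + 1) (by omega) (by omega) (by omega) (by omega)
    ring_nf at h₁ h₂ h₃ ⊢
    -- `(f 0 * f n - f 1 * f (n - 1)) ^ 2` lies in the ideal of the three minors `h₁, h₂, h₃`
    linear_combination (exp := 2) (f 0 * f (3 + m) - f 1 * f (2 + m)) * h₃
      + (f (1 + m) * f (3 + m) - f (2 + m) ^ 2) * h₁ + (f (1 + m) * f 1 - f (2 + m) * f 0) * h₂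

theorem stmt_1 (n : ℕ) (hn : 3 ≤ n) (f : ℕ → ℂ)
    (A : Matrix (Fin 2) (Fin n) ℂ) (hA : ∀ i j, A i j = f (i.val + j.val))
    (hrankA : A.rank = 2)
    (B : Matrix (Fin 3) (Fin (n - 1)) ℂ) (hB : ∀ i j, B i j = f (i.val + j.val)) :
    2 ≤ B.rank := by
  by_contra! hrankB
  have hBminors : ∀ i i' j j', i ≤ 2 → i' ≤ 2 → j ≤ n - 2 → j' ≤ n - 2 →
      f (i + j) * f (i' + j') = f (i + j') * f (i' + j) := fun i i' j j' hi hi' hj hj' => by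
    simpa only [hB] using Matrix.rank_le_one_iff.1 (by omega : B.rank ≤ 1)
      ⟨i, by omega⟩ ⟨i', by omega⟩ ⟨j, by omega⟩ ⟨j', by omega⟩
  have hrankA_le : A.rank ≤ 1 := Matrix.rank_le_one_iff.2 fun i i' j j' => by
    have h := hankel_two_row_minor_eq f hn hBminors j.2 j'.2
    simp only [hA]
    fin_cases i <;> fin_cases i' <;> simp only [zero_add, add_comm 1]
    · ring
    · exact h
    · linear_combination -h
    · ring
  omega
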